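/- arXiv:dg-ga/9611004 — 4 statements merged into one kernel-verified Lean document; each statement's English description precedes it below -/
import Mathlib

section
/- Let V, W be real vector spaces with linear complex structures j_L on V and j_M on W. Let P : V × V → W be a bilinear map satisfying (i) j_M∘P(ξ,η) = -P(j_Lξ,η) for all ξ,η, and (ii) P(ξ,η) - P(η,ξ) = P(j_Lξ, j_Lη) - P(j_Lη, j_Lξ) for all ξ,η. Then there exists a symmetric bilinear map Φ : V × V → W such that P(ξ,η) = j_M∘Φ(ξ,η) - Φ(j_Lξ,η) for all ξ,η. -/
/-- Lemma 2: any bilinear map `P` satisfying (i) `j_M P(ξ,η) = -P(j_L ξ, η)` and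
(ii) `P(ξ,η) - P(η,ξ) = P(j_L ξ, j_L η) - P(j_L η, j_L ξ)` arises as
`P(ξ,η) = j_M Φ(ξ,η) - Φ(j_L ξ, η)` for a symmetric bilinear `Φ`. -/
theorem stmt_1 (V W : Type*) [AddCommGroup V] [Module ℝ V]
    [AddCommGroup W] [Module ℝ W]
    (jL : V →ₗ[ℝ] V) (hjL : ∀ v, jL (jL v) = -v)
    (jM : W →ₗ[ℝ] W) (hjM : ∀ w, jM (jM w) = -w)
    (P : V →ₗ[ℝ] V →ₗ[ℝ] W)
    (hi : ∀ ξ η, jM (P ξ η) = -P (jL ξ) η)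
    (hii : ∀ ξ η, P ξ η - P η ξ = P (jL ξ) (jL η) - P (jL η) (jL ξ)) :
    ∃ Φ : V →ₗ[ℝ] V →ₗ[ℝ] W, (∀ ξ η, Φ ξ η = Φ η ξ) ∧
      ∀ ξ η, P ξ η = jM (Φ ξ η) - Φ (jL ξ) η := by
  refine ⟨LinearMap.mk₂ ℝ
      (fun ξ η => (3/8 : ℝ) • P (jL ξ) η + (3/8 : ℝ) • P (jL η) ξ
        - (1/8 : ℝ) • P ξ (jL η) - (1/8 : ℝ) • P η (jL ξ))
      (fun x y z => by simp [map_add, smul_add]; module)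
      (fun c x y => by simp [map_smul, smul_smul]; module)
      (fun x y z => by simp [map_add, smul_add]; module)
      (fun c x y => by simp [map_smul, smul_smul]; module), ?_, ?_⟩
  · intro ξ η
    simp only [LinearMap.mk₂_apply]
    module
  · intro ξ η
    have h1 : ∀ a b, jM (P (jL a) b) = P a b := by
      intro a b
      rw [hi (jL a) b, hjL, map_neg, LinearMap.neg_apply, neg_neg]
    have h2 : P (jL ξ) (jL η) = P ξ η - P η ξ + P (jL η) (jL ξ) := by
      have h := hii ξ η
      rw [sub_eq_sub_iff_add_eq_add] at h
      rw [← sub_eq_iff_eq_add'] at h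
      rw [← h]; abel
    simp only [LinearMap.mk₂_apply, map_add, map_sub, map_smul, h1, hi, hjL, map_neg,
      LinearMap.neg_apply, LinearMap.map_neg]
    rw [h2]
    module
end

section
/- Let j be a linear complex structure on a real vector space V, and let N : V × V → V be an alternating bilinear map satisfying N(jξ,η) = N(ξ,jη) = -jN(ξ,η) for all ξ,η (a linear Nijenhuis tensor). If N additionally satisfies the Jacobi identity, then N(ξ, N(η,ζ)) = 0 for all ξ, η, ζ ∈ V. -/
/-- If a linear Nijenhuis tensor (alternating, `j`-antilinear in each argument)
satisfies the Jacobi identity, then `N(ξ, N(η,ζ)) = 0`. -/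
theorem stmt_3 (V : Type*) [AddCommGroup V] [Module ℝ V]
    (j : V →ₗ[ℝ] V) (hj : ∀ v, j (j v) = -v)
    (N : V →ₗ[ℝ] V →ₗ[ℝ] V)
    (halt : ∀ ξ, N ξ ξ = 0)
    (hN1 : ∀ ξ η, N (j ξ) η = -j (N ξ η))
    (hN2 : ∀ ξ η, N ξ (j η) = -j (N ξ η))
    (hJac : ∀ ξ η ζ, N ξ (N η ζ) + N η (N ζ ξ) + N ζ (N ξ η) = 0) :
    ∀ ξ η ζ, N ξ (N η ζ) = 0 := by
  intro ξ η ζ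
  set A := N ξ (N η ζ) with hA
  set B := N η (N ζ ξ) with hB
  set C := N ζ (N ξ η) with hC
  have h1 : A + B + C = 0 := hJac ξ η ζ
  have h2 : -j A + j B + j C = 0 := by
    have h := hJac (j ξ) η ζ
    have e1 : N (j ξ) (N η ζ) = -j A := hN1 ξ (N η ζ)
    have e2 : N η (N ζ (j ξ)) = j B := by
      rw [hN2 ζ ξ, map_neg, hN2 η (N ζ ξ), neg_neg]
    have e3 : N ζ (N (j ξ) η) = j C := by
      rw [hN1 ξ η, map_neg, hN2 ζ (N ξ η), neg_neg]
    rw [e1, e2, e3] at h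
    exact h
  have h3 : -A + B + C = 0 := by
    have := congrArg j h2
    simp only [map_add, map_neg, hj, map_zero, neg_neg] at this
    have : -(-A) + -B + -C = 0 := by rw [← neg_neg A] at this; linear_combination (norm := abel) this
    linear_combination (norm := abel) -this
  have h4 : A + A = 0 := by linear_combination (norm := abel) h1 - h3
  have h5 : (2 : ℝ) • A = 0 := by rw [two_smul]; exact h4
  have := congrArg (fun x => (2⁻¹ : ℝ) • x) h5
  simpa [smul_smul] using this
end

section
/- Let j be a linear complex structure on a real vector space V and let N : V × V → V be an alternating bilinear map with N(jξ,η) = N(ξ,jη) = -jN(ξ,η) that satisfies the Jacobi identity. Then (V, N) is a solvable Lie algebra of solvability rank 2, i.e., N(N(ξ₁,ξ₂), N(ξ₃,ξ₄)) = 0 for all ξ₁,ξ₂,ξ₃,ξ₄ ∈ V. -/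
/-- A Nijenhuis tensor which is a Lie bracket gives a solvable Lie algebra of
solvability rank 2: `N(N(ξ₁,ξ₂), N(ξ₃,ξ₄)) = 0`. -/
theorem stmt_4 (V : Type*) [AddCommGroup V] [Module ℝ V]
    (j : V →ₗ[ℝ] V) (hj : ∀ v, j (j v) = -v)
    (N : V →ₗ[ℝ] V →ₗ[ℝ] V)
    (halt : ∀ ξ, N ξ ξ = 0)
    (hN1 : ∀ ξ η, N (j ξ) η = -j (N ξ η))
    (hN2 : ∀ ξ η, N ξ (j η) = -j (N ξ η))
    (hJac : ∀ ξ η ζ, N ξ (N η ζ) + N η (N ζ ξ) + N ζ (N ξ η) = 0) :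
    ∀ ξ₁ ξ₂ ξ₃ ξ₄, N (N ξ₁ ξ₂) (N ξ₃ ξ₄) = 0 := by
  have hjj : ∀ ξ η, N (j ξ) (j η) = -N ξ η := by
    intro ξ η
    rw [hN2, hN1, map_neg, hj, neg_neg]
  have key : ∀ ξ η ζ, N ζ (N ξ η) = 0 := by
    intro ξ η ζ
    have h1 := hJac ξ η ζ
    have h2 := hJac (j ξ) (j η) ζ
    simp only [hjj, hN1, hN2, map_neg, hj, neg_neg] at h2
    have : N ζ (N ξ η) + N ζ (N ξ η) = 0 := by
      linear_combination (norm := module) h1 - h2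
    have h2' : (2:ℝ) • N ζ (N ξ η) = 0 := by rw [two_smul]; exact this
    rcases smul_eq_zero.mp h2' with h | h
    · norm_num at h
    · exact h
  intro ξ₁ ξ₂ ξ₃ ξ₄
  exact key ξ₃ ξ₄ (N ξ₁ ξ₂)
end

section
/- Let PG : Λ²ℝ⁴ → ℝ⁶ be the Plücker map (ξ,η) ↦ (θ₁₂, θ₁₃, θ₁₄, θ₂₃, θ₂₄, θ₃₄) with θ_rs = ξʳηˢ - ξˢηʳ, and let pr : ℝ⁶ → ℝ⁴ be given by (θ₁₂ - θ₃₄, θ₁₃ + θ₂₄, θ₁₄, θ₂₃). Define the alternating bilinear map A = pr ∘ PG : ℝ⁴ × ℝ⁴ → ℝ⁴. Then A(ξ,η) = 0 if and only if ξ and η are linearly dependent. -/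
/-- Remark 9, case `n = 4`: the map `A = pr ∘ PG : Λ²ℝ⁴ → ℝ⁴`,
`A(ξ,η) = (θ₁₂-θ₃₄, θ₁₃+θ₂₄, θ₁₄, θ₂₃)` with `θ_rs = ξʳηˢ - ξˢηʳ`,
vanishes exactly on pairs of linearly dependent vectors. -/
theorem stmt_14 (A : (Fin 4 → ℝ) → (Fin 4 → ℝ) → (Fin 4 → ℝ))
    (hA : ∀ ξ η, A ξ η =
      ![( ξ 0 * η 1 - ξ 1 * η 0) - (ξ 2 * η 3 - ξ 3 * η 2),
        ( ξ 0 * η 2 - ξ 2 * η 0) + (ξ 1 * η 3 - ξ 3 * η 1),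
        ξ 0 * η 3 - ξ 3 * η 0,
        ξ 1 * η 2 - ξ 2 * η 1]) :
    ∀ ξ η, A ξ η = 0 ↔ ¬LinearIndependent ℝ ![ξ, η] := by
  intro ξ η
  rw [hA, LinearIndependent.pair_iff]
  push_neg
  constructor
  · intro h
    have h0 : ∀ i : Fin 4,
        (![( ξ 0 * η 1 - ξ 1 * η 0) - (ξ 2 * η 3 - ξ 3 * η 2),
        ( ξ 0 * η 2 - ξ 2 * η 0) + (ξ 1 * η 3 - ξ 3 * η 1),
        ξ 0 * η 3 - ξ 3 * η 0,
        ξ 1 * η 2 - ξ 2 * η 1] : Fin 4 → ℝ) i = 0 := fun i => by rw [h]; rfl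
    have e1 := h0 0
    have e2 := h0 1
    have e3 := h0 2
    have e4 := h0 3
    simp only [Matrix.cons_val_zero, Matrix.cons_val_one, Matrix.head_cons,
      Matrix.cons_val_two, Matrix.tail_cons, Matrix.cons_val_three] at e1 e2 e3 e4
    -- Plücker relation gives θ₁₂² + θ₁₃² = 0
    have key : (ξ 0 * η 1 - ξ 1 * η 0) ^ 2 + (ξ 0 * η 2 - ξ 2 * η 0) ^ 2 = 0 := by
      linear_combination (ξ 0 * η 1 - ξ 1 * η 0) * e1 + (ξ 0 * η 2 - ξ 2 * η 0) * e2
        - (ξ 1 * η 2 - ξ 2 * η 1) * e3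
    have h12 : ξ 0 * η 1 - ξ 1 * η 0 = 0 := by
      nlinarith [sq_nonneg (ξ 0 * η 1 - ξ 1 * η 0), sq_nonneg (ξ 0 * η 2 - ξ 2 * η 0)]
    have h13 : ξ 0 * η 2 - ξ 2 * η 0 = 0 := by
      nlinarith [sq_nonneg (ξ 0 * η 1 - ξ 1 * η 0), sq_nonneg (ξ 0 * η 2 - ξ 2 * η 0)]
    have minor : ∀ i j : Fin 4, ξ i * η j - ξ j * η i = 0 := by
      intro i j
      fin_cases i <;> fin_cases j <;> simp <;> linarith
    by_cases hξ : ξ = 0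
    · refine ⟨1, 0, by simp [hξ], fun hs => absurd hs one_ne_zero⟩
    · obtain ⟨k, hk⟩ := Function.ne_iff.mp hξ
      have hk' : ξ k ≠ 0 := by simpa using hk
      refine ⟨-(η k / ξ k), 1, ?_, fun _ => one_ne_zero⟩
      funext i
      have hm := minor k i
      simp only [Pi.add_apply, Pi.smul_apply, smul_eq_mul, Pi.zero_apply, one_mul]
      field_simp
      linarith
  · rintro ⟨s, t, hst, hne⟩
    have hi : ∀ i : Fin 4, s * ξ i + t * η i = 0 := by
      intro i
      have := congrFun hst i
      simpa using this
    have minor : ∀ i j : Fin 4, ξ i * η j - ξ j * η i = 0 := by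
      intro i j
      by_cases hs : s = 0
      · have ht := hne hs
        have htm : t * (ξ i * η j - ξ j * η i) = 0 := by
          linear_combination ξ i * hi j - ξ j * hi i
        rcases mul_eq_zero.mp htm with h | h
        · exact absurd h ht
        · exact h
      · have hsm : s * (ξ i * η j - ξ j * η i) = 0 := by
          linear_combination η j * hi i - η i * hi j
        rcases mul_eq_zero.mp hsm with h | h
        · exact absurd h hs
        · exact h
    funext i
    fin_cases i <;> simp <;>
      linarith [minor 0 1, minor 2 3, minor 0 2, minor 1 3, minor 0 3, minor 1 2]
end
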